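/- arXiv:2304.07479 — 3 statements merged into one kernel-verified Lean document; each statement's English description precedes it below -/
import Mathlib

section
/- For G = 1/2 and N ≥ 2, the Bonferroni index of the Gini-stable vector equals 𝓑(p^{(N,1/2)}) = (N/(N−1))·∑_{k=2}^{N} 1/k². -/
open Finset Real Filter

/-- Coefficient a_N(G) of the Gini-stable process. -/
noncomputable def giniA (G : ℝ) (N : ℕ) : ℝ :=
  (1 - G) / ((N : ℝ) * (G * ((N : ℝ) - 2) + 1))

/-- Coefficient b_N(G) of the Gini-stable process. -/
noncomputable def giniB (G : ℝ) (N : ℕ) : ℝ :=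
  G * ((N : ℝ) - 1) / (G * ((N : ℝ) - 2) + 1)

/-- Entries p_k^{(N,G)} of the Gini-stable process (1-indexed in k). -/
noncomputable def giniP (G : ℝ) : ℕ → ℕ → ℝ
  | 0, _ => 0
  | 1, k => if k = 1 then 1 else 0
  | N + 2, k =>
      giniA G (N + 2) + giniB G (N + 2) * (if k ≤ N + 1 then giniP G (N + 1) k else 0)

/-- Harmonic number H_m = ∑_{i=1}^m 1/i, with H 0 = 0. -/
noncomputable def H (m : ℕ) : ℝ := ∑ i ∈ Finset.range m, (1 : ℝ) / (i + 1)

lemma Hsucc (m : ℕ) : H (m + 1) = H m + 1 / ((m : ℝ) + 1) := by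
  simp [H, Finset.sum_range_succ]

lemma H0 : H 0 = 0 := by simp [H]

lemma giniP_half : ∀ N k : ℕ, 1 ≤ k → k ≤ N →
    giniP (1/2) N k = (H N - H (k - 1)) / N := by
  intro N
  induction N with
  | zero => intro k h1 h2; omega
  | succ n ih =>
    match n with
    | 0 =>
      intro k h1 h2
      interval_cases k
      simp [giniP, H]
    | m + 1 =>
      intro k h1 h2
      have hm2 : ((m : ℝ) + 2) ≠ 0 := by positivity
      have hm1 : ((m : ℝ) + 1) ≠ 0 := by positivity
      have hA : giniA (1/2) (m + 2) = 1 / ((m : ℝ) + 2) ^ 2 := by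
        rw [giniA]; push_cast
        have h2 : (1/2 : ℝ) * (((m : ℝ) + 2) - 2) + 1 = ((m : ℝ) + 2) / 2 := by ring
        rw [h2]; field_simp; ring
      have hB : giniB (1/2) (m + 2) = ((m : ℝ) + 1) / ((m : ℝ) + 2) := by
        rw [giniB]; push_cast
        have h2 : (1/2 : ℝ) * (((m : ℝ) + 2) - 2) + 1 = ((m : ℝ) + 2) / 2 := by ring
        rw [h2]; field_simp; ring
      show giniP (1/2) (m + 2) k = _
      rw [giniP, hA, hB]
      by_cases h : k ≤ m + 1
      · rw [if_pos h, ih k h1 h]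
        have hH : H (m + 2) = H (m + 1) + 1 / ((m:ℝ) + 2) := by
          rw [Hsucc]; push_cast; ring
        push_cast
        rw [hH]
        push_cast
        field_simp
        ring
      · have hk : k = m + 2 := by omega
        subst hk
        rw [if_neg h, mul_zero, add_zero]
        have : m + 2 - 1 = m + 1 := by omega
        rw [this]
        have hH : H (m + 2) = H (m + 1) + 1 / ((m:ℝ) + 2) := by
          rw [Hsucc]; push_cast; ring
        rw [hH]
        push_cast
        field_simp
        ring

lemma sumH (n : ℕ) : ∑ k ∈ Finset.range n, H k = n * H n - n := by
  induction n with
  | zero => simp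
  | succ n ih =>
    rw [Finset.sum_range_succ, ih, Hsucc]
    push_cast
    field_simp
    ring

lemma sum_inv_reflect (n : ℕ) :
    ∑ j ∈ Finset.range n, (1 : ℝ) / ((n : ℝ) - j) = H n := by
  rw [← Finset.sum_range_reflect (fun j => (1 : ℝ) / ((n : ℝ) - j)) n]
  rw [H]
  apply Finset.sum_congr rfl
  intro j hj
  rw [Finset.mem_range] at hj
  have : ((n - 1 - j : ℕ) : ℝ) = (n : ℝ) - 1 - j := by
    have h1 : j ≤ n - 1 := by omega
    push_cast [Nat.sub_sub, Nat.cast_sub (by omega : 1 + j ≤ n)]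
    ring
  rw [this]
  ring_nf

lemma key2 (n : ℕ) :
    ∑ j ∈ Finset.range n, (1 : ℝ) / (((j : ℝ) + 1) * ((n : ℝ) - j)) =
      2 * H n / ((n : ℝ) + 1) := by
  have h1 : ∀ j ∈ Finset.range n,
      (1 : ℝ) / (((j : ℝ) + 1) * ((n : ℝ) - j)) =
        (1 / ((n : ℝ) + 1)) * (1 / ((j : ℝ) + 1) + 1 / ((n : ℝ) - j)) := by
    intro j hj
    rw [Finset.mem_range] at hj
    have hj1 : ((j : ℝ) + 1) ≠ 0 := by positivity
    have hnj : ((n : ℝ) - j) ≠ 0 := by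
      have : (j : ℝ) < n := by exact_mod_cast hj
      linarith
    have hn1 : ((n : ℝ) + 1) ≠ 0 := by positivity
    field_simp
    ring
  rw [Finset.sum_congr rfl h1, ← Finset.mul_sum, Finset.sum_add_distrib,
    sum_inv_reflect]
  rw [show (∑ j ∈ Finset.range n, (1:ℝ) / ((j:ℝ) + 1)) = H n from rfl]
  ring

noncomputable def H2 (n : ℕ) : ℝ := ∑ i ∈ Finset.range n, (1 : ℝ) / ((i : ℝ) + 1) ^ 2

lemma keyC (n : ℕ) :
    ∑ j ∈ Finset.range n, H (n - 1 - j) / ((j : ℝ) + 1) = (H n) ^ 2 - H2 n := by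
  induction n with
  | zero => simp [H2, H0]
  | succ n ih =>
    rw [Finset.sum_range_succ]
    have hlast : H (n + 1 - 1 - n) = 0 := by
      simp [H0, show n + 1 - 1 - n = 0 by omega]
    rw [hlast]
    have hstep : ∀ j ∈ Finset.range n,
        H (n + 1 - 1 - j) / ((j : ℝ) + 1) =
          H (n - 1 - j) / ((j : ℝ) + 1) +
            (1 : ℝ) / (((j : ℝ) + 1) * ((n : ℝ) - j)) := by
      intro j hj
      rw [Finset.mem_range] at hj
      have e1 : n + 1 - 1 - j = (n - 1 - j) + 1 := by omega
      have e2 : ((n - 1 - j : ℕ) : ℝ) + 1 = (n : ℝ) - j := by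
        push_cast [Nat.cast_sub (by omega : 1 + j ≤ n), Nat.sub_sub]
        ring
      rw [e1, Hsucc, e2, add_div]
      congr 1
      rw [div_div]
      ring_nf
    rw [Finset.sum_congr rfl hstep, Finset.sum_add_distrib, ih, key2]
    have hH : H (n + 1) = H n + 1 / ((n : ℝ) + 1) := Hsucc n
    have hH2 : H2 (n + 1) = H2 n + 1 / ((n : ℝ) + 1) ^ 2 := by
      simp [H2, Finset.sum_range_succ]
    rw [hH, hH2]
    have hn1 : ((n : ℝ) + 1) ≠ 0 := by positivity
    field_simp
    ring

lemma Icc_one_sum (k : ℕ) (f : ℕ → ℝ) :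
    ∑ j ∈ Finset.Icc 1 k, f j = ∑ i ∈ Finset.range k, f (i + 1) := by
  rw [← Finset.Ico_add_one_right_eq_Icc, Finset.sum_Ico_eq_sum_range]
  simp only [Nat.add_sub_cancel]
  exact Finset.sum_congr rfl fun i _ => by rw [Nat.add_comm]

lemma Fformula (N k : ℕ) (h1 : 1 ≤ k) (h2 : k ≤ N) :
    ∑ j ∈ Finset.Icc 1 k, giniP (1/2) N j =
      (k : ℝ) * (H N + 1 - H k) / N := by
  have hrw : ∀ j ∈ Finset.Icc 1 k, giniP (1/2) N j = (H N - H (j - 1)) / N := by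
    intro j hj
    rw [Finset.mem_Icc] at hj
    exact giniP_half N j hj.1 (le_trans hj.2 h2)
  rw [Finset.sum_congr rfl hrw, Icc_one_sum k (fun j => (H N - H (j - 1)) / N)]
  simp only [Nat.add_sub_cancel]
  have hsplit : ∑ i ∈ Finset.range k, (H N - H i) / (N : ℝ) =
      ((k : ℝ) * H N - ∑ i ∈ Finset.range k, H i) / N := by
    rw [← Finset.sum_div]
    congr 1
    rw [Finset.sum_sub_distrib, Finset.sum_const, Finset.card_range]
    simp [nsmul_eq_mul]
  rw [hsplit, sumH]
  ring_nf

theorem stmt10 (N : ℕ) (hN : 2 ≤ N) :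
    ((N : ℝ) / ((N : ℝ) - 1)) *
      ((∑ k ∈ Finset.Icc 1 (N - 1),
          (∑ j ∈ Finset.Icc 1 k, giniP (1/2) N j) / ((N : ℝ) - (k : ℝ))) + 1 - H N) =
    ((N : ℝ) / ((N : ℝ) - 1)) * ∑ k ∈ Finset.Icc 2 N, (1 : ℝ) / (k : ℝ) ^ 2 := by
  have hc : (2 : ℝ) ≤ (N : ℝ) := by exact_mod_cast hN
  have hc0 : (N : ℝ) ≠ 0 := by linarith
  have hN1 : ((N - 1 : ℕ) : ℝ) = (N : ℝ) - 1 := by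
    push_cast [Nat.cast_sub (by omega : 1 ≤ N)]; ring
  congr 1
  -- rewrite the F_k's
  have hF : ∀ k ∈ Finset.Icc 1 (N - 1),
      (∑ j ∈ Finset.Icc 1 k, giniP (1/2) N j) / ((N : ℝ) - (k : ℝ)) =
        (H N + 1 - H k) / ((N : ℝ) - k) - (H N + 1 - H k) / N := by
    intro k hk
    rw [Finset.mem_Icc] at hk
    rw [Fformula N k hk.1 (by omega)]
    have hkN : (k : ℝ) < N := by exact_mod_cast (by omega : k < N)
    have hd : (N : ℝ) - k ≠ 0 := by linarith
    field_simp
    ring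
  rw [Finset.sum_congr rfl hF, Finset.sum_sub_distrib]
  -- sum of H over Icc
  have hshift : ∑ k ∈ Finset.Icc 1 (N - 1), H k = (N : ℝ) * H N - N := by
    rw [Icc_one_sum (N - 1) H]
    have h2 : ∑ i ∈ Finset.range ((N - 1) + 1), H i
        = ∑ i ∈ Finset.range (N - 1), H (i + 1) + H 0 := Finset.sum_range_succ' H (N - 1)
    have h3 : N - 1 + 1 = N := by omega
    rw [h3, sumH] at h2
    simp only [H0, add_zero] at h2
    linarith
  -- second sum A2
  have hA2 : ∑ k ∈ Finset.Icc 1 (N - 1), (H N + 1 - H k) / (N : ℝ)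
      = (((N : ℝ) - 1) * (H N + 1) - ((N : ℝ) * H N - N)) / N := by
    rw [← Finset.sum_div]
    congr 1
    rw [Finset.sum_sub_distrib, Finset.sum_const, Nat.card_Icc]
    have : (N - 1 + 1 - 1 : ℕ) = N - 1 := by omega
    rw [this, hshift, nsmul_eq_mul, hN1]
  -- first sum A1
  have hA1 : ∑ k ∈ Finset.Icc 1 (N - 1), (H N + 1 - H k) / ((N : ℝ) - k)
      = (H N + 1) * H (N - 1) - ((H N) ^ 2 - H2 N) := by
    rw [Icc_one_sum (N - 1) (fun k => (H N + 1 - H k) / ((N : ℝ) - k))]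
    have h1 : ∑ i ∈ Finset.range (N - 1), (H N + 1 - H (i + 1)) / ((N : ℝ) - ((i + 1 : ℕ) : ℝ))
        = ∑ i ∈ Finset.range (N - 1), (H N + 1 - H (i + 1)) / ((N : ℝ) - ((i : ℝ) + 1)) := by
      refine Finset.sum_congr rfl fun i _ => by push_cast; ring_nf
    rw [h1, ← Finset.sum_range_reflect
      (fun i => (H N + 1 - H (i + 1)) / ((N : ℝ) - ((i : ℝ) + 1))) (N - 1)]
    have h2 : ∀ j ∈ Finset.range (N - 1),
        (H N + 1 - H ((N - 1 - 1 - j) + 1)) / ((N : ℝ) - (((N - 1 - 1 - j : ℕ) : ℝ) + 1))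
          = (H N + 1) * (1 / ((j : ℝ) + 1)) - H (N - 1 - j) / ((j : ℝ) + 1) := by
      intro j hj
      rw [Finset.mem_range] at hj
      have e1 : (N - 1 - 1 - j) + 1 = N - 1 - j := by omega
      have e2 : ((N - 1 - 1 - j : ℕ) : ℝ) = (N : ℝ) - 2 - j := by
        push_cast [Nat.cast_sub (by omega : 2 + j ≤ N), Nat.sub_sub]; ring
      rw [e1, e2]
      have : (N : ℝ) - ((N : ℝ) - 2 - j + 1) = (j : ℝ) + 1 := by ring
      rw [this]
      ring
    rw [Finset.sum_congr rfl h2, Finset.sum_sub_distrib, ← Finset.mul_sum]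
    have h3 : (∑ j ∈ Finset.range (N - 1), 1 / ((j : ℝ) + 1)) = H (N - 1) := rfl
    have h4 : ∑ j ∈ Finset.range (N - 1), H (N - 1 - j) / ((j : ℝ) + 1)
        = (H N) ^ 2 - H2 N := by
      have h5 := keyC N
      have h6 : ∑ j ∈ Finset.range N, H (N - 1 - j) / ((j : ℝ) + 1)
          = ∑ j ∈ Finset.range (N - 1), H (N - 1 - j) / ((j : ℝ) + 1)
            + H (N - 1 - (N - 1)) / (((N - 1 : ℕ) : ℝ) + 1) := by
        conv_lhs => rw [show N = (N - 1) + 1 by omega]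
        rw [Finset.sum_range_succ]
        congr 2 <;> omega
      rw [h6] at h5
      have : N - 1 - (N - 1) = 0 := by omega
      rw [this, H0, zero_div, add_zero] at h5
      linarith [h5]
    rw [h3, h4]
  rw [hA1, hA2]
  -- RHS
  have hR : ∑ k ∈ Finset.Icc 2 N, (1 : ℝ) / (k : ℝ) ^ 2 = H2 N - 1 := by
    have h1 : ∑ k ∈ Finset.Icc 2 N, (1 : ℝ) / (k : ℝ) ^ 2
        = ∑ i ∈ Finset.range (N - 1), (1 : ℝ) / ((i : ℝ) + 2) ^ 2 := by
      rw [← Finset.Ico_add_one_right_eq_Icc, Finset.sum_Ico_eq_sum_range]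
      have : N + 1 - 2 = N - 1 := by omega
      rw [this]
      refine Finset.sum_congr rfl fun i _ => ?_
      push_cast; ring_nf
    have h2 : H2 N = 1 + ∑ i ∈ Finset.range (N - 1), (1 : ℝ) / ((i : ℝ) + 2) ^ 2 := by
      rw [H2]
      conv_lhs => rw [show N = (N - 1) + 1 by omega]
      rw [Finset.sum_range_succ' (fun i => (1 : ℝ) / ((i : ℝ) + 1) ^ 2) (N - 1)]
      have : ∀ i ∈ Finset.range (N - 1),
          (1 : ℝ) / (((i + 1 : ℕ) : ℝ) + 1) ^ 2 = (1 : ℝ) / ((i : ℝ) + 2) ^ 2 := by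
        intro i _; push_cast; ring_nf
      rw [Finset.sum_congr rfl this]
      norm_num
      ring
    rw [h1, h2]
    ring
  rw [hR]
  -- final algebra
  have hHN : H N = H (N - 1) + 1 / (N : ℝ) := by
    conv_lhs => rw [show N = (N - 1) + 1 by omega]
    rw [Hsucc, hN1]
    ring_nf
  rw [hHN]
  field_simp
  ring
end

section
/- For G ∈ (0,1) with G ≠ 1/2 and N ≥ 2, the Bonferroni index of the Gini-stable vector equals 𝓑(p^{(N,G)}) = (N/(N−1))·∑_{k=2}^{N} 1/(k·(k + 1/G − 2)). -/
open Finset Real Filter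

noncomputable def gg (β : ℝ) (n : ℕ) : ℝ := ∏ i ∈ Finset.range n, (((i:ℝ)+β)/((i:ℝ)+1))
noncomputable def vv (β : ℝ) (n : ℕ) : ℝ := (1/β) * ∏ i ∈ Finset.range n, (((i:ℝ)+1)/((i:ℝ)+1+β))

lemma gg_succ (β : ℝ) (n : ℕ) : gg β (n+1) = gg β n * (((n:ℝ)+β)/((n:ℝ)+1)) :=
  Finset.prod_range_succ _ _

lemma gg_pos {β : ℝ} (hβ : 0 < β) (n : ℕ) : 0 < gg β n :=
  Finset.prod_pos (fun i _ => div_pos (by positivity) (by positivity))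

lemma vv_succ (β : ℝ) (n : ℕ) : vv β (n+1) = vv β n * (((n:ℝ)+1)/((n:ℝ)+1+β)) := by
  unfold vv; rw [Finset.prod_range_succ]; ring

lemma vv_mul_gg {β : ℝ} (hβ : 0 < β) (n : ℕ) : vv β n * gg β (n+1) = 1/((n:ℝ)+1) := by
  induction n with
  | zero => simp [vv, gg]; field_simp
  | succ n ih =>
    rw [vv_succ, gg_succ]
    push_cast
    have h1 : ((n:ℝ)+1+β) ≠ 0 := by positivity
    have h2 : ((n:ℝ)+1) ≠ 0 := by positivity
    have h3 : ((n:ℝ)+2) ≠ 0 := by positivity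
    calc vv β n * (((n:ℝ)+1)/((n:ℝ)+1+β)) * (gg β (n+1) * (((n:ℝ)+1+β)/((n:ℝ)+1+1)))
        = (vv β n * gg β (n+1)) * ((((n:ℝ)+1)/((n:ℝ)+1+β)) * (((n:ℝ)+1+β)/((n:ℝ)+2))) := by ring
      _ = (1/((n:ℝ)+1)) * ((((n:ℝ)+1)/((n:ℝ)+1+β)) * (((n:ℝ)+1+β)/((n:ℝ)+2))) := by rw [ih]
      _ = 1/((n:ℝ)+1+1) := by rw [show ((n:ℝ)+1+1) = (n:ℝ)+2 by ring]; field_simp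

lemma vv_mul_gg' {β : ℝ} (hβ : 0 < β) (n : ℕ) : vv β (n+1) * gg β (n+1) = 1/((n:ℝ)+1+β) := by
  have h := vv_mul_gg hβ n
  rw [vv_succ]
  have h1 : ((n:ℝ)+1+β) ≠ 0 := by positivity
  have h2 : ((n:ℝ)+1) ≠ 0 := by positivity
  calc vv β n * (((n:ℝ)+1)/((n:ℝ)+1+β)) * gg β (n+1)
      = (vv β n * gg β (n+1)) * (((n:ℝ)+1)/((n:ℝ)+1+β)) := by ring
    _ = (1/((n:ℝ)+1)) * (((n:ℝ)+1)/((n:ℝ)+1+β)) := by rw [h]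
    _ = 1/((n:ℝ)+1+β) := by field_simp

lemma Gsum {β : ℝ} (hβ : 0 < β) (N : ℕ) :
    ∑ m ∈ Finset.range N, gg β m = (N:ℝ) * gg β N / β := by
  induction N with
  | zero => simp
  | succ n ih =>
    rw [Finset.sum_range_succ, ih, gg_succ]
    have h1 : ((n:ℝ)+1) ≠ 0 := by positivity
    have h2 : β ≠ 0 := ne_of_gt hβ
    push_cast
    field_simp

lemma Arec {β : ℝ} (hβ : 0 < β) (N : ℕ) :
    ((N:ℝ)+1) * (∑ m ∈ Finset.range (N+1), gg β m / (((N:ℝ)+1) - (m:ℝ))) =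
    ((N:ℝ)+β) * (∑ m ∈ Finset.range N, gg β m / ((N:ℝ) - (m:ℝ))) + gg β N := by
  have key : ∀ m ∈ Finset.range (N+1),
      ((N:ℝ)+1) * (gg β m / (((N:ℝ)+1) - (m:ℝ))) =
      gg β m + (gg β m * (m:ℝ)) / (((N:ℝ)+1) - (m:ℝ)) := by
    intro m hm
    have hm' : m < N+1 := Finset.mem_range.mp hm
    have hd : ((N:ℝ)+1) - (m:ℝ) ≠ 0 := by
      have : (m:ℝ) < (N:ℝ)+1 := by exact_mod_cast hm'
      linarith
    field_simp
    ring
  rw [Finset.mul_sum, Finset.sum_congr rfl key, Finset.sum_add_distrib]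
  have shift : ∑ m ∈ Finset.range (N+1), (gg β m * (m:ℝ)) / (((N:ℝ)+1) - (m:ℝ)) =
      ∑ m ∈ Finset.range N, (gg β (m+1) * ((m:ℝ)+1)) / ((N:ℝ) - (m:ℝ)) := by
    rw [Finset.sum_range_succ']
    simp only [Nat.cast_zero, mul_zero, zero_div, add_zero]
    apply Finset.sum_congr rfl
    intro m hm
    push_cast
    rw [show ((N:ℝ)+1) - ((m:ℝ)+1) = (N:ℝ) - (m:ℝ) by ring]
  rw [shift]
  have key2 : ∀ m ∈ Finset.range N,
      (gg β (m+1) * ((m:ℝ)+1)) / ((N:ℝ) - (m:ℝ)) =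
      ((N:ℝ)+β) * (gg β m / ((N:ℝ) - (m:ℝ))) - gg β m := by
    intro m hm
    have hm' : m < N := Finset.mem_range.mp hm
    have hd : (N:ℝ) - (m:ℝ) ≠ 0 := by
      have : (m:ℝ) < (N:ℝ) := by exact_mod_cast hm'
      linarith
    have h1 : ((m:ℝ)+1) ≠ 0 := by positivity
    rw [gg_succ]
    field_simp
    ring
  rw [Finset.sum_congr rfl key2, Finset.sum_sub_distrib, ← Finset.mul_sum]
  rw [Finset.sum_range_succ]
  ring

lemma Aclosed {β : ℝ} (hβ : 0 < β) (N : ℕ) :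
    ∑ m ∈ Finset.range N, gg β m / ((N:ℝ) - (m:ℝ)) =
    gg β N * ∑ i ∈ Finset.range N, 1/((i:ℝ)+β) := by
  induction N with
  | zero => simp
  | succ n ih =>
    have h := Arec hβ n
    rw [ih] at h
    have hne : ((n:ℝ)+1) ≠ 0 := by positivity
    apply mul_left_cancel₀ hne
    push_cast at h ⊢
    rw [h, Finset.sum_range_succ, gg_succ]
    have h1 : ((n:ℝ)+β) ≠ 0 := by positivity
    field_simp

lemma H_succ (n : ℕ) : H (n+1) = H n + 1/((n:ℝ)+1) := by
  rw [H, H, Finset.sum_range_succ]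

lemma Hsum (N : ℕ) : ∑ m ∈ Finset.range N, H m = (N:ℝ) * H N - (N:ℝ) := by
  induction N with
  | zero => simp
  | succ n ih =>
    rw [Finset.sum_range_succ, ih, H_succ]
    have hne : ((n:ℝ)+1) ≠ 0 := by positivity
    push_cast
    field_simp
    ring

lemma Lam_closed {β : ℝ} (hβ : 0 < β) (N : ℕ) :
    ∑ m ∈ Finset.range N, gg β m * H (N-1-m) =
    (N:ℝ) * gg β N / β * ((∑ i ∈ Finset.range N, 1/((i:ℝ)+β)) - 1/β) := by
  induction N with
  | zero => simp
  | succ n ih =>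
    have step : ∑ m ∈ Finset.range (n+1), gg β m * H (n+1-1-m) =
        (∑ m ∈ Finset.range n, gg β m * H (n-1-m)) +
        (∑ m ∈ Finset.range n, gg β m / ((n:ℝ) - (m:ℝ))) := by
      rw [Finset.sum_range_succ]
      have hz : H (n+1-1-n) = 0 := by
        have : n+1-1-n = 0 := by omega
        rw [this]; simp [H]
      rw [hz, mul_zero, add_zero, ← Finset.sum_add_distrib]
      apply Finset.sum_congr rfl
      intro m hm
      have hm' : m < n := Finset.mem_range.mp hm
      have e1 : n+1-1-m = (n-1-m)+1 := by omega
      have e2 : ((n-1-m : ℕ):ℝ) = (n:ℝ) - 1 - (m:ℝ) := by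
        have : ((n-1-m : ℕ):ℝ) = ((n:ℕ):ℝ) - 1 - (m:ℝ) := by
          rw [show n-1-m = n-(1+m) by omega, Nat.cast_sub (by omega)]
          push_cast; ring
        exact this
      rw [e1, H_succ, e2, show (n:ℝ)-1-(m:ℝ)+1 = (n:ℝ)-(m:ℝ) by ring]
      ring
    rw [step, ih, Aclosed hβ n, Finset.sum_range_succ, gg_succ]
    have h1 : ((n:ℝ)+β) ≠ 0 := by positivity
    have h2 : ((n:ℝ)+1) ≠ 0 := by positivity
    have h3 : β ≠ 0 := ne_of_gt hβ
    push_cast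
    field_simp
    ring

lemma p_closed (G : ℝ) (hG0 : 0 < G) (hG1 : G < 1) (hG : G ≠ 1/2) :
    ∀ M : ℕ, ∀ j : ℕ, 1 ≤ j → j ≤ M+1 →
      giniP G (M+1) j = ((1-G)/(2*G-1)) * (vv (1/G-1) M * gg (1/G-1) (j-1))
        - ((1-G)/(2*G-1))/((M:ℝ)+1) := by
  have hGne : G ≠ 0 := ne_of_gt hG0
  have h2G : 2*G-1 ≠ 0 := by
    intro h; apply hG; linarith
  have h1G : 1-G ≠ 0 := by intro h; linarith
  have hβeq : 1/G - 1 = (1-G)/G := by field_simp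
  have hβ : 0 < 1/G - 1 := by
    have : 1 < 1/G := by rw [lt_div_iff₀ hG0]; linarith
    linarith
  have hβ0 : (1/G - 1) ≠ 0 := ne_of_gt hβ
  intro M
  induction M with
  | zero =>
    intro j hj1 hj2
    have : j = 1 := by omega
    subst this
    show (if (1:ℕ) = 1 then (1:ℝ) else 0) = _
    rw [if_pos rfl]
    simp only [vv, gg, Finset.range_zero, Finset.prod_empty, Nat.cast_zero]
    rw [hβeq]
    field_simp
    rw [eq_div_iff (by intro h; apply h2G; linarith)]; simp; ring
  | succ M ih =>
    intro j hj1 hj2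
    have hMG : G * (M:ℝ) + 1 ≠ 0 := by positivity
    have hden : G * (((M:ℝ)+2) - 2) + 1 = G * (M:ℝ) + 1 := by ring
    have hM1 : ((M:ℝ)+1) ≠ 0 := by positivity
    have hM2 : ((M:ℝ)+2) ≠ 0 := by positivity
    have hMβ : ((M:ℝ)+1+(1/G-1)) ≠ 0 := by
      rw [show ((M:ℝ)+1+(1/G-1)) = (M:ℝ) + 1/G by ring]
      positivity
    have hMβ' : ((M:ℝ)*G+1) ≠ 0 := by positivity
    have hrw : (M:ℝ)+1+(1/G-1) = (G*(M:ℝ)+1)/G := by field_simp; ring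
    have hB : giniB G (M+2) = ((M:ℝ)+1)/((M:ℝ)+1+(1/G-1)) := by
      unfold giniB
      push_cast
      rw [hden, hrw, div_div_eq_mul_div]
      rw [div_eq_div_iff hMG hMG]
      ring
    have hA : giniA G (M+2) = ((1-G)/(2*G-1)) * (1/((M:ℝ)+1+(1/G-1)))
        - ((1-G)/(2*G-1))/((M:ℝ)+2) := by
      unfold giniA
      push_cast
      rw [hden, hrw, one_div_div]
      field_simp
      rw [eq_div_iff (by intro h; apply h2G; linarith)]; ring
    show giniA G (M+2) + giniB G (M+2) * (if j ≤ M+1 then giniP G (M+1) j else 0) = _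
    by_cases hcase : j ≤ M+1
    · rw [if_pos hcase, ih j hj1 hcase, hA, hB, vv_succ, hrw, one_div_div]
      push_cast
      field_simp
      ring
    · have : j = M+2 := by omega
      subst this
      rw [if_neg hcase, mul_zero, add_zero, hA]
      have hvg : vv (1/G-1) (M+1) * gg (1/G-1) (M+2-1) = 1/((M:ℝ)+1+(1/G-1)) :=
        vv_mul_gg' hβ M
      rw [hvg, hrw, one_div_div]
      push_cast
      ring

lemma sum_Icc_range (a b : ℕ) (f : ℕ → ℝ) :
    ∑ k ∈ Finset.Icc a b, f k = ∑ i ∈ Finset.range (b+1-a), f (a+i) := by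
  rw [← Finset.Ico_add_one_right_eq_Icc, Finset.sum_Ico_eq_sum_range]

lemma reflect_harm (t : ℕ) : ∑ i ∈ Finset.range t, (1:ℝ)/((t:ℝ)-(i:ℝ)) = H t := by
  rw [H, ← Finset.sum_range_reflect]
  apply Finset.sum_congr rfl
  intro i hi
  have hi' : i < t := Finset.mem_range.mp hi
  congr 1
  rw [show t - 1 - i = t - (i+1) by omega, Nat.cast_sub (by omega)]
  push_cast
  ring

lemma icc_harm (M j : ℕ) (hj1 : 1 ≤ j) (hj2 : j ≤ M+1) :
    ∑ k ∈ Finset.Icc j (M+1), (1:ℝ)/(((M:ℝ)+2) - (k:ℝ)) = H (M+2-j) := by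
  rw [sum_Icc_range]
  have ht : M + 1 + 1 - j = M + 2 - j := by omega
  rw [ht]
  have := reflect_harm (M+2-j)
  rw [← this]
  apply Finset.sum_congr rfl
  intro i hi
  have hi' : i < M+2-j := Finset.mem_range.mp hi
  congr 1
  rw [Nat.cast_sub (by omega)]
  push_cast
  ring

theorem stmt11 (G : ℝ) (hG0 : 0 < G) (hG1 : G < 1) (hG : G ≠ 1/2)
    (N : ℕ) (hN : 2 ≤ N) :
    ((N : ℝ) / ((N : ℝ) - 1)) *
      ((∑ k ∈ Finset.Icc 1 (N - 1),
          (∑ j ∈ Finset.Icc 1 k, giniP G N j) / ((N : ℝ) - (k : ℝ))) + 1 - H N) =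
    ((N : ℝ) / ((N : ℝ) - 1)) *
      ∑ k ∈ Finset.Icc 2 N, (1 : ℝ) / ((k : ℝ) * ((k : ℝ) + 1 / G - 2)) := by
  obtain ⟨M, rfl⟩ : ∃ M, N = M + 2 := ⟨N - 2, by omega⟩
  have hGne : G ≠ 0 := ne_of_gt hG0
  have h2G : 2*G-1 ≠ 0 := by intro h; apply hG; linarith
  have h1G : 1-G ≠ 0 := by intro h; linarith
  have hβ : 0 < 1/G - 1 := by
    have : 1 < 1/G := by rw [lt_div_iff₀ hG0]; linarith
    linarith
  have hβeq : 1/G - 1 = (1-G)/G := by field_simp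
  have hM2 : ((M:ℝ)+2) ≠ 0 := by positivity
  set c : ℝ := (1-G)/(2*G-1) with hc
  congr 1
  have hsub1 : M + 2 - 1 = M + 1 := rfl
  rw [hsub1]
  -- Step 1: swap the double sum
  have e1 : ∀ k ∈ Finset.Icc 1 (M+1),
      (∑ j ∈ Finset.Icc 1 k, giniP G (M+2) j) / ((↑(M+2):ℝ) - (k:ℝ)) =
      ∑ j ∈ Finset.Icc 1 (M+1),
        (if j ≤ k then giniP G (M+2) j / ((↑(M+2):ℝ) - (k:ℝ)) else 0) := by
    intro k hk
    rw [Finset.mem_Icc] at hk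
    have hfil : Finset.filter (fun j => j ≤ k) (Finset.Icc 1 (M+1)) = Finset.Icc 1 k := by
      ext x
      simp only [Finset.mem_filter, Finset.mem_Icc]
      omega
    rw [Finset.sum_div, ← hfil, Finset.sum_filter]
  rw [Finset.sum_congr rfl e1, Finset.sum_comm]
  have e2 : ∀ j ∈ Finset.Icc 1 (M+1),
      (∑ k ∈ Finset.Icc 1 (M+1),
        (if j ≤ k then giniP G (M+2) j / ((↑(M+2):ℝ) - (k:ℝ)) else 0)) =
      giniP G (M+2) j * H (M+2-j) := by
    intro j hj
    rw [Finset.mem_Icc] at hj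
    have hfil : Finset.filter (fun k => j ≤ k) (Finset.Icc 1 (M+1)) = Finset.Icc j (M+1) := by
      ext x
      simp only [Finset.mem_filter, Finset.mem_Icc]
      omega
    rw [← Finset.sum_filter, hfil, ← icc_harm M j hj.1 hj.2, Finset.mul_sum]
    apply Finset.sum_congr rfl
    intro k hk
    rw [mul_one_div]
    congr 1
    push_cast
    ring
  rw [Finset.sum_congr rfl e2]
  -- Step 2: closed form of giniP
  have e3 : ∀ j ∈ Finset.Icc 1 (M+1),
      giniP G (M+2) j * H (M+2-j) =
      c * vv (1/G-1) (M+1) * (gg (1/G-1) (j-1) * H (M+2-j))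
        - (c/((M:ℝ)+2)) * H (M+2-j) := by
    intro j hj
    rw [Finset.mem_Icc] at hj
    have := p_closed G hG0 hG1 hG (M+1) j hj.1 (by omega)
    rw [this]
    push_cast
    ring
  rw [Finset.sum_congr rfl e3, Finset.sum_sub_distrib, ← Finset.mul_sum, ← Finset.mul_sum]
  -- Step 3: the two sums
  have eS1 : ∑ j ∈ Finset.Icc 1 (M+1), gg (1/G-1) (j-1) * H (M+2-j) =
      ∑ m ∈ Finset.range (M+2), gg (1/G-1) m * H (M+2-1-m) := by
    rw [sum_Icc_range, Finset.sum_range_succ]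
    have hz : H (M+2-1-(M+1)) = 0 := by
      rw [show M+2-1-(M+1) = 0 by omega]; simp [H]
    rw [hz, mul_zero, add_zero]
    apply Finset.sum_congr (by congr 1)
    intro i hi
    congr 2
    · omega
    · omega
  have eS2 : ∑ j ∈ Finset.Icc 1 (M+1), H (M+2-j) =
      ((M:ℝ)+2) * H (M+2) - ((M:ℝ)+2) := by
    have r1 : ∑ j ∈ Finset.Icc 1 (M+1), H (M+2-j) =
        ∑ i ∈ Finset.range (M+2), H (M+2-1-i) := by
      rw [sum_Icc_range, Finset.sum_range_succ]
      have hz : H (M+2-1-(M+1)) = 0 := by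
        rw [show M+2-1-(M+1) = 0 by omega]; simp [H]
      rw [hz, add_zero]
      apply Finset.sum_congr (by congr 1)
      intro i hi
      congr 1
      omega
    rw [r1, Finset.sum_range_reflect]
    have := Hsum (M+2)
    push_cast at this
    exact this
  rw [eS1, eS2, Lam_closed hβ (M+2)]
  -- Step 4: final algebra
  have hvg2 : vv (1/G-1) (M+1) * gg (1/G-1) (M+2) = 1/((M:ℝ)+2) := by
    have h := vv_mul_gg hβ (M+1)
    push_cast at h
    rw [show ((M:ℝ)+1+1) = (M:ℝ)+2 by ring] at h
    exact h
  have hkey : c * vv (1/G-1) (M+1) *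
      ((↑(M+2):ℝ) * gg (1/G-1) (M+2) / (1/G-1) *
        ((∑ i ∈ Finset.range (M+2), 1/((i:ℝ)+(1/G-1))) - 1/(1/G-1))) =
      c / (1/G-1) * ((∑ i ∈ Finset.range (M+2), 1/((i:ℝ)+(1/G-1))) - 1/(1/G-1)) := by
    push_cast
    calc c * vv (1/G-1) (M+1) *
        (((M:ℝ)+2) * gg (1/G-1) (M+2) / (1/G-1) *
          ((∑ i ∈ Finset.range (M+2), 1/((i:ℝ)+(1/G-1))) - 1/(1/G-1))) =
        (vv (1/G-1) (M+1) * gg (1/G-1) (M+2)) * (((M:ℝ)+2) * (c / (1/G-1) *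
          ((∑ i ∈ Finset.range (M+2), 1/((i:ℝ)+(1/G-1))) - 1/(1/G-1)))) := by ring
      _ = (1/((M:ℝ)+2)) * (((M:ℝ)+2) * (c / (1/G-1) *
          ((∑ i ∈ Finset.range (M+2), 1/((i:ℝ)+(1/G-1))) - 1/(1/G-1)))) := by rw [hvg2]
      _ = c / (1/G-1) * ((∑ i ∈ Finset.range (M+2), 1/((i:ℝ)+(1/G-1))) - 1/(1/G-1)) := by
          field_simp
  push_cast
  push_cast at hkey
  rw [hkey]
  -- expand S and H
  have hS : (∑ i ∈ Finset.range (M+2), 1/((i:ℝ)+(1/G-1))) =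
      (∑ i ∈ Finset.range (M+1), 1/((i:ℝ)+1+(1/G-1))) + 1/(1/G-1) := by
    rw [Finset.sum_range_succ']
    push_cast
    norm_num
  have hH : H (M+2) = (∑ i ∈ Finset.range (M+1), 1/((i:ℝ)+2)) + 1 := by
    rw [H, Finset.sum_range_succ']
    push_cast
    norm_num
    exact Finset.sum_congr rfl fun x _ => by ring
  have hR : ∑ k ∈ Finset.Icc 2 (M+2), (1:ℝ)/((k:ℝ)*((k:ℝ)+1/G-2)) =
      ∑ i ∈ Finset.range (M+1), 1/(((i:ℝ)+2)*((i:ℝ)+1+(1/G-1))) := by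
    rw [sum_Icc_range]
    apply Finset.sum_congr (by congr 1)
    intro i hi
    push_cast
    congr 1
    ring
  rw [hS, hH, hR]
  have hfin : ∑ i ∈ Finset.range (M+1), 1/(((i:ℝ)+2)*((i:ℝ)+1+(1/G-1))) =
      (c/(1/G-1)) * (∑ i ∈ Finset.range (M+1), 1/((i:ℝ)+1+(1/G-1)))
      - (c+1) * (∑ i ∈ Finset.range (M+1), 1/((i:ℝ)+2)) := by
    rw [Finset.mul_sum, Finset.mul_sum, ← Finset.sum_sub_distrib]
    apply Finset.sum_congr rfl
    intro i _
    have hi0 : (0:ℝ) ≤ (i:ℝ) := Nat.cast_nonneg i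
    have h1 : ((i:ℝ)+2) ≠ 0 := by positivity
    have h2 : ((i:ℝ)+1+(1/G-1)) ≠ 0 := by
      have : (0:ℝ) < (i:ℝ)+1+(1/G-1) := by linarith
      linarith
    rw [hc, hβeq]
    rw [show (i:ℝ)+1+(1-G)/G = ((i:ℝ)*G+1)/G by field_simp; ring]
    have h3 : ((i:ℝ)*G+1) ≠ 0 := by positivity
    field_simp
    ring
  rw [hfin]
  field_simp
  ring
end

section
/- For 0 ≤ G ≤ G' < 1 and any N ≥ 2, the Gini-stable vectors satisfy the majorisation relation p^{(N,G)} ⪯ p^{(N,G')}, i.e., for every k = 1,…,N, ∑_{i=1}^k p_i^{(N,G)} ≤ ∑_{i=1}^k p_i^{(N,G')}. -/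
open Finset Real Filter

noncomputable def Sg (G : ℝ) (N k : ℕ) : ℝ := ∑ i ∈ Finset.Icc 1 k, giniP G N i

lemma Sg_one (G : ℝ) : Sg G 1 1 = 1 := by simp [Sg, giniP]

lemma Sg_rec (G : ℝ) (m k : ℕ) (hk : k ≤ m+1) :
    Sg G (m+2) k = k * giniA G (m+2) + giniB G (m+2) * Sg G (m+1) k := by
  unfold Sg
  rw [show ∑ i ∈ Finset.Icc 1 k, giniP G (m+2) i
      = ∑ i ∈ Finset.Icc 1 k, (giniA G (m+2) + giniB G (m+2) * giniP G (m+1) i) from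
    Finset.sum_congr rfl (fun i hi => by
      have hi' : i ≤ m+1 := le_trans (Finset.mem_Icc.1 hi).2 hk
      simp [giniP, hi'])]
  rw [Finset.sum_add_distrib, ← Finset.mul_sum, Finset.sum_const, Nat.card_Icc]
  simp [nsmul_eq_mul]

lemma cast_sub2 (n : ℕ) : ((n+2 : ℕ) : ℝ) - 2 = (n : ℝ) := by push_cast; ring

lemma Sg_total (G : ℝ) (hG0 : 0 ≤ G) (m : ℕ) : Sg G (m+1) (m+1) = 1 := by
  induction m with
  | zero => exact Sg_one G
  | succ n ih =>
    have hc : (0:ℝ) < G * n + 1 := by positivity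
    have htop : Sg G (n+2) (n+2) = Sg G (n+2) (n+1) + giniP G (n+2) (n+2) := by
      unfold Sg; rw [Finset.sum_Icc_succ_top (by omega)]
    have hp : giniP G (n+2) (n+2) = giniA G (n+2) := by simp [giniP]
    rw [htop, Sg_rec G n (n+1) le_rfl, ih, hp]
    unfold giniA giniB
    rw [cast_sub2]
    push_cast
    field_simp
    ring

lemma giniB_nonneg (G : ℝ) (hG0 : 0 ≤ G) (n : ℕ) : 0 ≤ giniB G (n+2) := by
  unfold giniB
  rw [cast_sub2]
  have h1 : (0:ℝ) ≤ ((n+2:ℕ):ℝ) - 1 := by push_cast; linarith [Nat.cast_nonneg (α := ℝ) n]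
  have hc : (0:ℝ) < G * n + 1 := by positivity
  exact div_nonneg (mul_nonneg hG0 h1) hc.le

lemma Sg_lb (G : ℝ) (hG0 : 0 ≤ G) (m k : ℕ) (hk1 : 1 ≤ k) (hk : k ≤ m+1) :
    (k:ℝ)/((m:ℝ)+1) ≤ Sg G (m+1) k := by
  induction m with
  | zero =>
    interval_cases k
    simp [Sg_one]
  | succ n ih =>
    rcases eq_or_lt_of_le hk with he | hlt
    · rw [he, Sg_total G hG0]
      rw [div_le_one (by positivity)]
      push_cast; linarith
    · push_cast
      have hk' : k ≤ n+1 := by omega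
      have ihh := ih hk'
      have hb := giniB_nonneg G hG0 n
      have hc : (0:ℝ) < G * n + 1 := by positivity
      have key : (k:ℝ)/((n:ℝ)+1+1) ≤ (k:ℝ) * giniA G (n+2) + giniB G (n+2) * ((k:ℝ)/((n:ℝ)+1)) := by
        unfold giniA giniB
        rw [cast_sub2]
        push_cast
        rw [div_le_iff₀ (by positivity)]
        field_simp
        ring_nf
        have hkn : (0:ℝ) ≤ (k:ℝ) := Nat.cast_nonneg k
        have hnn : (0:ℝ) ≤ (n:ℝ) := Nat.cast_nonneg n
        nlinarith [mul_nonneg hkn hG0, mul_nonneg (mul_nonneg hkn hnn) hG0,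
          mul_nonneg (mul_nonneg hkn hnn) (mul_nonneg hG0 hG0),
          mul_nonneg (mul_nonneg hkn (mul_nonneg hnn hnn)) hG0,
          mul_nonneg (mul_nonneg hkn (mul_nonneg hnn hnn)) (mul_nonneg hG0 hG0),
          mul_nonneg (mul_nonneg hkn (mul_nonneg hnn (mul_nonneg hnn hnn))) (mul_nonneg hG0 hG0)]
      rw [Sg_rec G n k hk']
      calc (k:ℝ)/((n:ℝ)+1+1) ≤ (k:ℝ) * giniA G (n+2) + giniB G (n+2) * ((k:ℝ)/((n:ℝ)+1)) := key
        _ ≤ (k:ℝ) * giniA G (n+2) + giniB G (n+2) * Sg G (n+1) k := by nlinarith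

lemma giniB_mono (G G' : ℝ) (hG0 : 0 ≤ G) (hGG' : G ≤ G') (n : ℕ) :
    giniB G (n+2) ≤ giniB G' (n+2) := by
  have hG0' : 0 ≤ G' := le_trans hG0 hGG'
  unfold giniB
  rw [cast_sub2]
  push_cast
  have hc : (0:ℝ) < G * n + 1 := by positivity
  have hc' : (0:ℝ) < G' * n + 1 := by positivity
  rw [div_le_div_iff₀ hc hc']
  have hnn : (0:ℝ) ≤ (n:ℝ) := Nat.cast_nonneg n
  nlinarith [mul_nonneg (sub_nonneg.2 hGG') hnn]

lemma combo_eq (G : ℝ) (hG0 : 0 ≤ G) (n k : ℕ) :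
    (k:ℝ) * giniA G (n+2) + giniB G (n+2) * ((k:ℝ)/((n:ℝ)+1))
      = (k:ℝ) * (1 + G * ((n:ℝ)+1)) / (((n:ℝ)+2) * (G * n + 1)) := by
  unfold giniA giniB
  rw [cast_sub2]
  push_cast
  have hc : (0:ℝ) < G * n + 1 := by positivity
  field_simp
  ring

lemma key2_s19 (G G' : ℝ) (hG0 : 0 ≤ G) (hGG' : G ≤ G') (n k : ℕ) :
    (k:ℝ) * giniA G (n+2) + giniB G (n+2) * ((k:ℝ)/((n:ℝ)+1))
      ≤ (k:ℝ) * giniA G' (n+2) + giniB G' (n+2) * ((k:ℝ)/((n:ℝ)+1)) := by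
  have hG0' : 0 ≤ G' := le_trans hG0 hGG'
  rw [combo_eq G hG0, combo_eq G' hG0']
  have hc : (0:ℝ) < G * n + 1 := by positivity
  have hc' : (0:ℝ) < G' * n + 1 := by positivity
  have hnn : (0:ℝ) ≤ (n:ℝ) := Nat.cast_nonneg n
  have hkn : (0:ℝ) ≤ (k:ℝ) := Nat.cast_nonneg k
  rw [div_le_div_iff₀ (by positivity) (by positivity)]
  nlinarith [mul_nonneg (sub_nonneg.2 hGG') hkn, mul_nonneg (mul_nonneg (sub_nonneg.2 hGG') hkn) hnn,
    mul_nonneg (mul_nonneg (mul_nonneg (sub_nonneg.2 hGG') hkn) hnn) hnn,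
    mul_nonneg (mul_nonneg (mul_nonneg (mul_nonneg (sub_nonneg.2 hGG') hkn) hnn) hnn) (mul_nonneg hG0 hG0'),
    mul_nonneg (mul_nonneg (mul_nonneg (sub_nonneg.2 hGG') hkn) hnn) (mul_nonneg hG0 hG0')]

lemma Sg_mono (G G' : ℝ) (hG0 : 0 ≤ G) (hGG' : G ≤ G') (m k : ℕ) (hk1 : 1 ≤ k) (hk : k ≤ m+1) :
    Sg G (m+1) k ≤ Sg G' (m+1) k := by
  have hG0' : 0 ≤ G' := le_trans hG0 hGG'
  induction m with
  | zero => interval_cases k; simp [Sg_one]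
  | succ n ih =>
    rcases eq_or_lt_of_le hk with he | hlt
    · rw [he, Sg_total G hG0, Sg_total G' hG0']
    · have hk' : k ≤ n+1 := by omega
      have hI := ih hk'
      have hS' := Sg_lb G' hG0' n k hk1 hk'
      have hbG := giniB_nonneg G hG0 n
      have hbb := giniB_mono G G' hG0 hGG' n
      have hkey := key2_s19 G G' hG0 hGG' n k
      rw [Sg_rec G n k hk', Sg_rec G' n k hk']
      have h1 : giniB G (n+2) * Sg G (n+1) k ≤ giniB G (n+2) * Sg G' (n+1) k :=
        mul_le_mul_of_nonneg_left hI hbG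
      have h2 : 0 ≤ (giniB G' (n+2) - giniB G (n+2)) * (Sg G' (n+1) k - (k:ℝ)/((n:ℝ)+1)) :=
        mul_nonneg (by linarith) (by linarith)
      nlinarith [h1, h2, hkey]

theorem stmt19 (G G' : ℝ) (hG0 : 0 ≤ G) (hGG' : G ≤ G') (hG1 : G' < 1)
    (N : ℕ) (hN : 2 ≤ N) (k : ℕ) (hk1 : 1 ≤ k) (hkN : k ≤ N) :
    ∑ i ∈ Finset.Icc 1 k, giniP G N i ≤ ∑ i ∈ Finset.Icc 1 k, giniP G' N i := by
  obtain ⟨m, rfl⟩ : ∃ m, N = m + 1 := ⟨N - 1, by omega⟩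
  exact Sg_mono G G' hG0 hGG' m k hk1 (by omega)
end
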